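/- arXiv:1004.1615 — 3 statements merged into one kernel-verified Lean document; each statement's English description precedes it below -/
import Mathlib

section
/- Let G be a finite group and p a prime. The number of conjugacy classes of G equals the sum, over a set U of representatives for the G-conjugacy classes of p-elements of G, of the number of C_G(u)-conjugacy classes of p-regular elements of the centralizer C_G(u). Equivalently, conjugacy classes of G are in bijection with G-orbits (under simultaneous conjugation) of pairs (u, s) where u is a p-element, s is a p'-element, and us = su. -/
/-!
Every element `x` of a finite group factors uniquely as `x = u * s` with `u` a `p`-element,
`s` a `p'`-element and `u`, `s` commuting: both factors can be taken to be powers of `x`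
(from a Bézout relation between the `p`-part and the `p'`-part of the order of `x`), and
comparing with any other factorization `u' * s'`, the element `u'⁻¹ * u = s' * s⁻¹` is both a
`p`-element and a `p'`-element, hence trivial.

The factorization is injective and conjugation-equivariant, so conjugacy classes of `G` match
the orbits of such pairs. Sorting the classes by the class of their `p`-part, the classes whose
`p`-part is conjugate to a fixed `u` match the classes of `p'`-elements of `C_G(u)` through
`s ↦ u * s`: by uniqueness, an element conjugating `u * s` to `u * s'` centralizes `u`.
-/

theorem Set.natCard_image_congr {α β γ : Type*} {f : α → β} {g : α → γ} {s : Set α}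
    (h : ∀ a ∈ s, ∀ b ∈ s, f a = f b ↔ g a = g b) : Nat.card (f '' s) = Nat.card (g '' s) := by
  rw [Set.image_eq_range, Set.image_eq_range]
  exact Nat.card_congr <| (Setoid.quotientKerEquivRange _).symm.trans <|
    (Quotient.congr (Equiv.refl s) fun a b => h a a.2 b b.2).trans (Setoid.quotientKerEquivRange _)

theorem Set.natCard_image_eq_of_mapsTo {α β A B : Type*} {s : Set α} {t : Set β}
    {π : α → A} {π' : β → B} {f : α → β} (hf : Set.MapsTo f s t)
    (hcover : ∀ b ∈ t, ∃ a ∈ s, π' (f a) = π' b)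
    (hker : ∀ a ∈ s, ∀ a' ∈ s, π a = π a' ↔ π' (f a) = π' (f a')) :
    Nat.card (π '' s) = Nat.card (π' '' t) := by
  have ht : π' '' t = (π' ∘ f) '' s := by
    ext c
    constructor
    · rintro ⟨b, hb, rfl⟩
      obtain ⟨a, ha, hab⟩ := hcover b hb
      exact ⟨a, ha, hab⟩
    · rintro ⟨a, ha, rfl⟩
      exact ⟨f a, hf ha, rfl⟩
  rw [ht]
  exact Set.natCard_image_congr hker

theorem Nat.card_eq_sum_card_fiber {α β ι : Type*} [Finite α] {F : α → β} {U : Finset ι}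
    {e : ι → β} (he : Set.InjOn e U) (hF : ∀ a, F a ∈ e '' U) :
    Nat.card α = ∑ i ∈ U, Nat.card {a // F a = e i} := by
  classical
  have := Finset.card_preimage_eq_sum_card_image_eq (f := F) (s := U.image e)
    fun _ _ => Set.toFinite _
  rwa [Finset.sum_image he, Finset.coe_image, Set.preimage_eq_univ_iff.mpr, Nat.card_univ] at this
  rintro _ ⟨a, rfl⟩
  exact hF a

section PDecomposition

variable {G : Type*} [Group G] {p : ℕ}

def IsPElement (p : ℕ) (g : G) : Prop := ∃ n : ℕ, orderOf g = p ^ n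

theorem orderOf_conj (g x : G) : orderOf (g * x * g⁻¹) = orderOf x :=
  (MulAut.conj g).orderOf_eq x

theorem IsPElement.conj {x : G} (hx : IsPElement p x) (g : G) : IsPElement p (g * x * g⁻¹) := by
  rwa [IsPElement, orderOf_conj]

theorem IsPElement.inv {x : G} (hx : IsPElement p x) : IsPElement p x⁻¹ := by
  rwa [IsPElement, orderOf_inv]

theorem isPElement_of_orderOf_dvd [Fact p.Prime] {x : G} {n : ℕ} (h : orderOf x ∣ p ^ n) :
    IsPElement p x := by
  obtain ⟨k, -, hk⟩ := (Nat.dvd_prime_pow Fact.out).mp h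
  exact ⟨k, hk⟩

theorem Commute.isPElement_mul [Fact p.Prime] {x y : G} (hxy : Commute x y)
    (hx : IsPElement p x) (hy : IsPElement p y) : IsPElement p (x * y) := by
  obtain ⟨n, hn⟩ := hx
  obtain ⟨m, hm⟩ := hy
  exact isPElement_of_orderOf_dvd (n := n + m) <| by
    simpa [hn, hm, pow_add] using hxy.orderOf_mul_dvd_mul_orderOf

theorem Commute.coprime_orderOf_mul {x y : G} (hxy : Commute x y)
    (hx : (orderOf x).Coprime p) (hy : (orderOf y).Coprime p) : (orderOf (x * y)).Coprime p :=
  (hx.mul_left hy).coprime_dvd_left hxy.orderOf_mul_dvd_mul_orderOf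

theorem IsPElement.eq_one_of_coprime {x : G} (hx : IsPElement p x)
    (hx' : (orderOf x).Coprime p) : x = 1 := by
  obtain ⟨n, hn⟩ := hx
  rw [hn] at hx'
  rw [← orderOf_eq_one_iff, hn, ← Nat.coprime_self]
  exact hx'.pow_right n

structure IsPDecomposition (p : ℕ) (u s : G) : Prop where
  isPElement : IsPElement p u
  coprime : (orderOf s).Coprime p
  commute : Commute u s

variable {u s : G}

theorem isPDecomposition_iff :
    IsPDecomposition p u s ↔ IsPElement p u ∧ (orderOf s).Coprime p ∧ Commute u s :=
  ⟨fun h => ⟨h.isPElement, h.coprime, h.commute⟩, fun ⟨hu, hs, hc⟩ => ⟨hu, hs, hc⟩⟩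

theorem IsPDecomposition.conj (h : IsPDecomposition p u s) (g : G) :
    IsPDecomposition p (g * u * g⁻¹) (g * s * g⁻¹) :=
  ⟨h.isPElement.conj g, by rw [orderOf_conj]; exact h.coprime,
    by simpa using h.commute.map (MulAut.conj g)⟩

theorem IsPDecomposition.isOfFinOrder_mul [Fact p.Prime] (h : IsPDecomposition p u s) :
    IsOfFinOrder (u * s) := by
  have hp : p.Prime := Fact.out
  refine h.commute.isOfFinOrder_mul (orderOf_pos_iff.mp ?_) (orderOf_pos_iff.mp ?_)
  · obtain ⟨n, hn⟩ := h.isPElement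
    exact hn ▸ pow_pos hp.pos n
  · refine Nat.pos_of_ne_zero fun h0 => hp.one_lt.ne' ?_
    simpa [h0] using h.coprime

theorem IsOfFinOrder.exists_isPDecomposition [Fact p.Prime] {x : G} (hx : IsOfFinOrder x) :
    ∃ u ∈ Subgroup.zpowers x, ∃ s ∈ Subgroup.zpowers x, IsPDecomposition p u s ∧ u * s = x := by
  have hp : p.Prime := Fact.out
  have hn : orderOf x ≠ 0 := hx.orderOf_pos.ne'
  set k := (orderOf x).factorization p
  set m := orderOf x / p ^ k
  have hsplit : p ^ k * m = orderOf x := Nat.ordProj_mul_ordCompl_eq_self _ p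
  have hm : m.Coprime p := (Nat.coprime_ordCompl hp hn).symm
  -- `hab : a * p ^ k + b * m = 1`
  obtain ⟨a, b, hab⟩ := Nat.isCoprime_iff_coprime.mpr (hm.symm.pow_left k)
  refine ⟨x ^ (b * m), Subgroup.zpow_mem_zpowers x _, x ^ (a * (p ^ k : ℕ)),
    Subgroup.zpow_mem_zpowers x _, ⟨?_, ?_, Commute.zpow_zpow_self x _ _⟩, ?_⟩
  · refine isPElement_of_orderOf_dvd (n := k) (orderOf_dvd_of_pow_eq_one ?_)
    rw [← zpow_natCast, ← zpow_mul, ← orderOf_dvd_iff_zpow_eq_one]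
    exact ⟨b, by rw [← hsplit]; push_cast; ring⟩
  · refine hm.coprime_dvd_left (orderOf_dvd_of_pow_eq_one ?_)
    rw [← zpow_natCast, ← zpow_mul, ← orderOf_dvd_iff_zpow_eq_one]
    exact ⟨a, by rw [← hsplit]; push_cast; ring⟩
  · rw [← zpow_add, add_comm, hab, zpow_one]

theorem IsPDecomposition.eq_of_mem_zpowers [Fact p.Prime] {u₀ s₀ : G} (h : IsPDecomposition p u s)
    (h₀ : IsPDecomposition p u₀ s₀) (hu₀ : u₀ ∈ Subgroup.zpowers (u * s))
    (hs₀ : s₀ ∈ Subgroup.zpowers (u * s)) (hmul : u₀ * s₀ = u * s) : u = u₀ ∧ s = s₀ := by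
  have commute_of_mem {y z : G} (hy : y ∈ Subgroup.zpowers (u * s)) (hz : Commute z (u * s)) :
      Commute z y := by
    obtain ⟨i, rfl⟩ := Subgroup.mem_zpowers_iff.mp hy
    exact hz.zpow_right i
  have hu : Commute u (u * s) := (Commute.refl u).mul_right h.commute
  have hs : Commute s (u * s) := h.commute.symm.mul_right (Commute.refl s)
  have heq : u⁻¹ * u₀ = s * s₀⁻¹ := by
    rw [inv_mul_eq_iff_eq_mul, ← mul_assoc, eq_mul_inv_iff_mul_eq, hmul]
  have hone : u⁻¹ * u₀ = 1 := by
    refine IsPElement.eq_one_of_coprime (p := p) ?_ ?_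
    · exact (commute_of_mem hu₀ hu).inv_left.isPElement_mul h.isPElement.inv h₀.isPElement
    · rw [heq]
      exact (commute_of_mem hs₀ hs).inv_right.coprime_orderOf_mul h.coprime
        (by rw [orderOf_inv]; exact h₀.coprime)
  refine ⟨inv_mul_eq_one.mp hone, ?_⟩
  rw [heq] at hone
  exact mul_inv_eq_one.mp hone

theorem IsPDecomposition.eq_of_mul_eq [Fact p.Prime] {u' s' : G} (h : IsPDecomposition p u s)
    (h' : IsPDecomposition p u' s') (hmul : u * s = u' * s') : u = u' ∧ s = s' := by
  obtain ⟨u₀, hu₀, s₀, hs₀, h₀, hmul₀⟩ := h.isOfFinOrder_mul.exists_isPDecomposition (p := p)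
  obtain ⟨hu, hs⟩ := h.eq_of_mem_zpowers h₀ hu₀ hs₀ hmul₀
  rw [hmul] at hu₀ hs₀ hmul₀
  obtain ⟨hu', hs'⟩ := h'.eq_of_mem_zpowers h₀ hu₀ hs₀ hmul₀
  exact ⟨hu.trans hu'.symm, hs.trans hs'.symm⟩

theorem isPDecomposition_of_mem_centralizer {c : G} (hu : IsPElement p u)
    (hc : c ∈ Subgroup.centralizer {u}) (hc' : (orderOf c).Coprime p) :
    IsPDecomposition p u c :=
  ⟨hu, hc', (Subgroup.mem_centralizer_singleton_iff.mp hc).symm⟩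

theorem isConj_mul_iff_of_mem_centralizer [Fact p.Prime] (hu : IsPElement p u)
    {c₁ c₂ : Subgroup.centralizer {u}} (h₁ : (orderOf c₁).Coprime p)
    (h₂ : (orderOf c₂).Coprime p) : IsConj (u * c₁) (u * c₂) ↔ IsConj c₁ c₂ := by
  rw [← Subgroup.orderOf_coe] at h₁ h₂
  have hd₁ := isPDecomposition_of_mem_centralizer hu c₁.2 h₁
  have hd₂ := isPDecomposition_of_mem_centralizer hu c₂.2 h₂
  simp only [isConj_iff]
  constructor
  · rintro ⟨g, hg⟩
    rw [← conj_mul] at hg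
    obtain ⟨hgu, hgc⟩ := (hd₁.conj g).eq_of_mul_eq hd₂ hg
    have hg_mem : g ∈ Subgroup.centralizer {u} :=
      Subgroup.mem_centralizer_singleton_iff.mpr (mul_inv_eq_iff_eq_mul.mp hgu)
    exact ⟨⟨g, hg_mem⟩, Subtype.ext hgc⟩
  · rintro ⟨c, rfl⟩
    refine ⟨c, ?_⟩
    rw [← conj_mul, mul_inv_eq_iff_eq_mul.mpr (Subgroup.mem_centralizer_singleton_iff.mp c.2)]
    rfl

section Finite

variable [Finite G] [Fact p.Prime]

theorem exists_isPDecomposition_mul_eq (x : G) :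
    ∃ q : G × G, IsPDecomposition p q.1 q.2 ∧ q.1 * q.2 = x := by
  obtain ⟨u, -, s, -, h, hx⟩ := (isOfFinOrder_of_finite x).exists_isPDecomposition (p := p)
  exact ⟨(u, s), h, hx⟩

variable (p) in
noncomputable def pParts (x : G) : G × G :=
  (exists_isPDecomposition_mul_eq (p := p) x).choose

theorem isPDecomposition_pParts (x : G) : IsPDecomposition p (pParts p x).1 (pParts p x).2 :=
  (exists_isPDecomposition_mul_eq x).choose_spec.1

theorem pParts_fst_mul_snd (x : G) : (pParts p x).1 * (pParts p x).2 = x :=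
  (exists_isPDecomposition_mul_eq x).choose_spec.2

theorem IsPDecomposition.pParts_mul (h : IsPDecomposition p u s) : pParts p (u * s) = (u, s) := by
  obtain ⟨hu, hs⟩ := (isPDecomposition_pParts (u * s)).eq_of_mul_eq h (pParts_fst_mul_snd _)
  exact Prod.ext hu hs

theorem pParts_conj (g x : G) :
    pParts p (g * x * g⁻¹) = (g * (pParts p x).1 * g⁻¹, g * (pParts p x).2 * g⁻¹) := by
  conv_lhs => rw [← pParts_fst_mul_snd (p := p) x]
  rw [← ((isPDecomposition_pParts x).conj g).pParts_mul]
  group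

theorem pParts_smul (c : ConjAct G) (x : G) : pParts p (c • x) = c • pParts p x := by
  rw [ConjAct.smul_def, pParts_conj]
  rfl

theorem conjClasses_mk_eq_mk_iff_pParts (x y : G) :
    ConjClasses.mk x = ConjClasses.mk y ↔
      Quotient.mk (MulAction.orbitRel (ConjAct G) (G × G)) (pParts p x) =
        Quotient.mk _ (pParts p y) := by
  rw [ConjClasses.mk_eq_mk_iff_isConj, ← ConjAct.mem_orbit_conjAct, Quotient.eq,
    MulAction.orbitRel_apply, MulAction.mem_orbit_iff, MulAction.mem_orbit_iff]
  refine exists_congr fun c => ⟨fun h => by rw [← pParts_smul, h], fun h => ?_⟩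
  rw [← pParts_fst_mul_snd (p := p) (c • y), pParts_smul, h, pParts_fst_mul_snd]

theorem natCard_conjClasses_eq_natCard_orbits_isPDecomposition :
    Nat.card (ConjClasses G) =
      Nat.card (Quotient.mk (MulAction.orbitRel (ConjAct G) (G × G)) ''
        {q : G × G | IsPDecomposition p q.1 q.2}) := by
  rw [← Nat.card_univ, ← Set.image_univ_of_surjective ConjClasses.mk_surjective]
  refine Set.natCard_image_eq_of_mapsTo (f := pParts p) (fun x _ => isPDecomposition_pParts x)
    (fun q hq => ⟨q.1 * q.2, trivial, by rw [hq.pParts_mul]⟩)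
    (fun x _ y _ => conjClasses_mk_eq_mk_iff_pParts x y)

variable (p) in
noncomputable def pPartClass : ConjClasses G → ConjClasses G :=
  Quotient.lift (s := IsConj.setoid G) (fun x => ConjClasses.mk (pParts p x).1) fun x y hxy => by
    obtain ⟨g, rfl⟩ := isConj_iff.mp hxy
    rw [pParts_conj, ConjClasses.mk_eq_mk_iff_isConj]
    exact isConj_iff.mpr ⟨g, rfl⟩

theorem pPartClass_mk (x : G) : pPartClass p (ConjClasses.mk x) = ConjClasses.mk (pParts p x).1 :=
  rfl

theorem exists_isConj_mul_of_pPartClass_eq {x : G}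
    (hx : pPartClass p (ConjClasses.mk x) = ConjClasses.mk u) :
    ∃ c : Subgroup.centralizer {u}, (orderOf c).Coprime p ∧ IsConj (u * c) x := by
  obtain ⟨g, hg⟩ := isConj_iff.mp (ConjClasses.mk_eq_mk_iff_isConj.mp hx)
  have hd := (isPDecomposition_pParts (p := p) x).conj g
  rw [hg] at hd
  refine ⟨⟨_, Subgroup.mem_centralizer_singleton_iff.mpr hd.commute.eq.symm⟩,
    by rw [Subgroup.orderOf_mk]; exact hd.coprime, isConj_iff.mpr ⟨g⁻¹, ?_⟩⟩
  show g⁻¹ * (u * (g * (pParts p x).2 * g⁻¹)) * g⁻¹⁻¹ = x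
  rw [← hg, conj_mul, pParts_fst_mul_snd]
  group

theorem natCard_coprime_conjClasses_centralizer (hu : IsPElement p u) :
    Nat.card {c : ConjClasses (Subgroup.centralizer {u}) //
        ∃ s : Subgroup.centralizer {u}, (orderOf s).Coprime p ∧ ConjClasses.mk s = c} =
      Nat.card {c : ConjClasses G // pPartClass p c = ConjClasses.mk u} := by
  have := Set.natCard_image_eq_of_mapsTo (π := ConjClasses.mk) (π' := ConjClasses.mk)
    (s := {c : Subgroup.centralizer {u} | (orderOf c).Coprime p})
    (t := ConjClasses.mk ⁻¹' {c | pPartClass p c = ConjClasses.mk u}) (f := fun c => u * c)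
    (fun c hc => show pPartClass p (ConjClasses.mk (u * c)) = ConjClasses.mk u by
      have hc' : (orderOf (c : G)).Coprime p := by rw [Subgroup.orderOf_coe]; exact hc
      rw [pPartClass_mk, (isPDecomposition_of_mem_centralizer hu c.2 hc').pParts_mul])
    (fun x hx => ?_) (fun c₁ h₁ c₂ h₂ => ?_)
  · rwa [Set.image_preimage_eq _ ConjClasses.mk_surjective] at this
  · obtain ⟨c, hc, hconj⟩ := exists_isConj_mul_of_pPartClass_eq hx
    exact ⟨c, hc, ConjClasses.mk_eq_mk_iff_isConj.mpr hconj⟩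
  · simp only [ConjClasses.mk_eq_mk_iff_isConj]
    exact (isConj_mul_iff_of_mem_centralizer hu h₁ h₂).symm

theorem natCard_conjClasses_eq_sum_natCard_pPartClass_fiber {U : Finset G}
    (hU1 : ∀ u ∈ U, IsPElement p u) (hU2 : ∀ v : G, IsPElement p v → ∃! u, u ∈ U ∧ IsConj u v) :
    Nat.card (ConjClasses G) =
      ∑ u ∈ U, Nat.card {c : ConjClasses G // pPartClass p c = ConjClasses.mk u} := by
  refine Nat.card_eq_sum_card_fiber (fun u hu v hv huv => ?_) fun c => ?_
  · exact (hU2 v (hU1 v hv)).unique ⟨hu, ConjClasses.mk_eq_mk_iff_isConj.mp huv⟩ ⟨hv, .refl v⟩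
  · obtain ⟨x, rfl⟩ := ConjClasses.mk_surjective c
    obtain ⟨u, ⟨hu, hux⟩, -⟩ := hU2 _ (isPDecomposition_pParts (p := p) x).isPElement
    exact ⟨u, hu, ConjClasses.mk_eq_mk_iff_isConj.mpr hux⟩

end Finite

end PDecomposition

/-- The number of conjugacy classes of a finite group `G` equals the
sum, over a set `U` of representatives of the conjugacy classes of `p`-elements,
of the number of classes of `p`-regular elements of the centralizer `C_G(u)`;
equivalently, conjugacy classes of `G` biject with `G`-conjugation orbits of
commuting pairs `(u, s)` with `u` a `p`-element and `s` a `p'`-element. -/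
theorem stmt6 (p : ℕ) [Fact p.Prime] (G : Type*) [Group G] [Fintype G]
    (U : Finset G)
    (hU1 : ∀ u ∈ U, ∃ n : ℕ, orderOf u = p ^ n)
    (hU2 : ∀ v : G, (∃ n : ℕ, orderOf v = p ^ n) → ∃! u, u ∈ U ∧ IsConj u v) :
    (Nat.card (ConjClasses G) =
      ∑ u ∈ U,
        Nat.card {c : ConjClasses ↥(Subgroup.centralizer ({u} : Set G)) //
          ∃ s : ↥(Subgroup.centralizer ({u} : Set G)),
            Nat.Coprime (orderOf s) p ∧ ConjClasses.mk s = c}) ∧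
    (Nat.card (ConjClasses G) =
      Nat.card {o : Quotient (MulAction.orbitRel (ConjAct G) (G × G)) //
        ∃ u s : G, (∃ n : ℕ, orderOf u = p ^ n) ∧ Nat.Coprime (orderOf s) p ∧
          u * s = s * u ∧
          Quotient.mk (MulAction.orbitRel (ConjAct G) (G × G)) (u, s) = o}) := by
  refine ⟨?_, ?_⟩
  · rw [natCard_conjClasses_eq_sum_natCard_pPartClass_fiber hU1 hU2]
    exact Finset.sum_congr rfl fun u hu => (natCard_coprime_conjClasses_centralizer (hU1 u hu)).symm
  · rw [natCard_conjClasses_eq_natCard_orbits_isPDecomposition (p := p)]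
    refine Nat.card_congr (Equiv.subtypeEquivRight fun o => ?_)
    simp only [Set.mem_image, Set.mem_ofPred_eq, Prod.exists, isPDecomposition_iff, and_assoc]
    rfl
end

section
/- Let Q be a finite p-group, A a proper subgroup of Q, and B any subgroup of Q. Then p divides the cardinality of the set X = { Aw : w ∈ Q, wBw⁻¹ ⊆ A } of right cosets of A in Q whose representatives conjugate B into A. (In particular, if X is nonempty then it has at least p elements.) -/
/-!
The normalizer `N` of `A` acts on the cosets `A w` by left multiplication, `n • A w = A (n w)`,
and preserves the condition `w B w⁻¹ ⊆ A`. A coset fixed by all of `N` would force `N ≤ A`;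
but `A < N`, because a finite `p`-group is nilpotent and so satisfies the normalizer condition.
Hence the `p`-group `N` acts without fixed points, and `p` divides the number of cosets.
-/

open Pointwise MulOpposite MulAction

namespace Subgroup

variable {G : Type*} [Group G] {A : Subgroup G}

theorem smul_coe_eq_op_smul_of_mem_normalizer {n : G} (hn : n ∈ normalizer (A : Set G)) :
    n • (A : Set G) = op n • (A : Set G) := by
  ext x
  rw [mem_leftCoset_iff, mem_rightCoset_iff, SetLike.mem_coe, SetLike.mem_coe,
    mem_normalizer_iff.mp hn, mul_inv_cancel_left]

theorem smul_rightCoset_of_mem_normalizer {n : G} (hn : n ∈ normalizer (A : Set G)) (w : G) :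
    n • op w • (A : Set G) = op (n * w) • (A : Set G) := by
  rw [smul_comm, smul_coe_eq_op_smul_of_mem_normalizer hn, smul_smul, op_mul]

theorem setOf_exists_mem_eq_mul (w : G) : {x : G | ∃ a ∈ A, x = a * w} = op w • (A : Set G) := by
  ext x
  rw [mem_rightCoset_iff]
  exact ⟨fun ⟨a, ha, hx⟩ ↦ by simpa [hx] using ha, fun hx ↦ ⟨x * w⁻¹, hx, by group⟩⟩

variable (A) (B : Subgroup G)

def rightCosetsConjugatingInto : Set (Set G) :=
  {C | ∃ w : G, (∀ b ∈ B, w * b * w⁻¹ ∈ A) ∧ C = op w • (A : Set G)}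

def rightCosetsConjugatingIntoSubMulAction : SubMulAction (normalizer (A : Set G)) (Set G) where
  carrier := rightCosetsConjugatingInto A B
  smul_mem' := by
    rintro ⟨n, hn⟩ _ ⟨w, hw, rfl⟩
    refine ⟨n * w, fun b hb ↦ ?_, smul_rightCoset_of_mem_normalizer hn w⟩
    simpa [mul_assoc] using (mem_normalizer_iff.mp hn _).mp (hw b hb)

theorem fixedPoints_rightCosetsConjugatingInto_eq_empty (hA : A < normalizer (A : Set G)) :
    fixedPoints (normalizer (A : Set G)) (rightCosetsConjugatingIntoSubMulAction A B) = ∅ := by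
  refine Set.eq_empty_of_forall_notMem ?_
  rintro ⟨C, w, _, hC⟩ hfix
  refine hA.not_ge fun n hn ↦ ?_
  have : n • op w • (A : Set G) = op w • (A : Set G) := by
    simpa [hC] using congrArg Subtype.val (hfix ⟨n, hn⟩)
  rw [smul_rightCoset_of_mem_normalizer hn, rightCoset_eq_iff] at this
  simpa using this

end Subgroup

theorem IsPGroup.dvd_card_rightCosetsConjugatingInto {p : ℕ} [Fact p.Prime] {G : Type*} [Group G]
    [Finite G] (hG : IsPGroup p G) {A : Subgroup G} (hA : A < ⊤) (B : Subgroup G) :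
    p ∣ Nat.card (Subgroup.rightCosetsConjugatingInto A B) := by
  have hAN : A < Subgroup.normalizer (A : Set G) :=
    Group.normalizerCondition_of_isNilpotent (h := hG.isNilpotent) A hA
  by_contra hp
  have hN := hG.to_subgroup (Subgroup.normalizer (A : Set G))
  have := hN.nonempty_fixed_point_of_prime_not_dvd_card
    (Subgroup.rightCosetsConjugatingIntoSubMulAction A B) hp
  rw [Subgroup.fixedPoints_rightCosetsConjugatingInto_eq_empty A B hAN] at this
  exact Set.not_nonempty_empty this

/-- Let `Q` be a finite `p`-group, `A < Q` a proper subgroup and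
`B ≤ Q`.  Then `p` divides the number of right cosets `Aw` of `A` in `Q` whose
representative conjugates `B` into `A`; in particular if such a coset exists
there are at least `p` of them. -/
theorem stmt11 (p : ℕ) [Fact p.Prime] (Q : Type*) [Group Q] [Fintype Q]
    (hQ : IsPGroup p Q) (A B : Subgroup Q) (hA : A < ⊤) :
    p ∣ Nat.card {C : Set Q | ∃ w : Q,
        (∀ b ∈ B, w * b * w⁻¹ ∈ A) ∧ C = {x : Q | ∃ a ∈ A, x = a * w}} ∧
      (({C : Set Q | ∃ w : Q,
          (∀ b ∈ B, w * b * w⁻¹ ∈ A) ∧ C = {x : Q | ∃ a ∈ A, x = a * w}}).Nonempty →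
        p ≤ Nat.card {C : Set Q | ∃ w : Q,
          (∀ b ∈ B, w * b * w⁻¹ ∈ A) ∧ C = {x : Q | ∃ a ∈ A, x = a * w}}) := by
  simp_rw [Subgroup.setOf_exists_mem_eq_mul]
  have hdvd := hQ.dvd_card_rightCosetsConjugatingInto hA B
  exact ⟨hdvd, fun hne ↦ Nat.le_of_dvd (have := hne.to_subtype; Nat.card_pos) hdvd⟩
end

section
/- Let C be a small category and m: C → Cat a functor ('representation') such that for every object C of C the category m(C) is discrete (it has no morphisms other than identities). Let m⋊C denote the Grothendieck construction (semidirect product category), whose objects are pairs (X, C) with X an object of m(C), and whose morphisms (X, C) → (X', C') are morphisms f: C → C' in C with m(f)(X) = X'. Let a: (m⋊C)^op → Ab be a contravariant functor, and define a^m: C^op → Ab by a^m(C) = ∏_X a(X, C) (product over objects X of m(C)), with the evident induced maps. Then for every n ≥ 0, the cohomology groups of the two categories agree: H^n(m⋊C, a) ≅ H^n(C, a^m), where H^n of a small category D with coefficients in a contravariant functor b: D^op → Ab is the n-th cohomology of the cochain complex whose n-cochains are ∏_{q} b(q(0)), the product running over all functors q: [n] → D from the linearly ordered set [n] = {0 <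 1 < ⋯ < n}, with the usual simplicial differential. -/
/-!
Because every `m c` is discrete, a chain `Q : [k] ⥤ m ⋊ C` is determined by its image `q` in `C`
and the point `(Q 0).fiber` over `q 0`: the remaining points are the transports of that point
along `q`, and all fibre components of the morphisms are identities. Currying along this bijection
identifies `Cᵏ(m ⋊ C, a)` with `∏_q ∏_X a(X, q 0) = Cᵏ(C, aᵐ)`, and in the face terms of the
differential the coefficient map of `q(0 ≤ j)` on `aᵐ` evaluated at `(Q 0).fiber` is the
coefficient map of `Q(0 ≤ j)` on `a`. So the two cochain complexes are isomorphic.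
-/

open CategoryTheory

universe w v u

/-- A coefficient system on a category `D`: the data of a contravariant functor
from `D` to abelian groups (functoriality is stated separately as
`CoefSys.IsFunctorial`). -/
structure CoefSys (D : Type u) [Category.{v} D] where
  /-- the abelian group attached to each object -/
  A : D → Type w
  /-- the group structures -/
  [inst : ∀ X : D, AddCommGroup (A X)]
  /-- the contravariantly induced maps -/
  map : ∀ {X Y : D}, (X ⟶ Y) → (A Y →+ A X)

attribute [instance] CoefSys.inst

/-- Functoriality of a coefficient system, i.e. being a contravariant functor
`Dᵒᵖ → Ab`. -/
def CoefSys.IsFunctorial {D : Type u} [Category.{v} D] (a : CoefSys.{w} D) : Prop :=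
  (∀ X : D, a.map (𝟙 X) = AddMonoidHom.id _) ∧
    ∀ {X Y Z : D} (f : X ⟶ Y) (g : Y ⟶ Z), a.map (f ≫ g) = (a.map f).comp (a.map g)

/-- The group of `n`-cochains of a small category `D` with coefficients in `a`:
the product, over all `n`-chains `q : [n] ⥤ D` (where `[n] = {0 < ⋯ < n}`), of
the coefficient group at `q 0`. -/
def Cochain {D : Type u} [Category.{v} D] (a : CoefSys.{w} D) (n : ℕ) :
    Type (max u v w) :=
  ∀ q : Fin (n + 1) ⥤ D, a.A (q.obj 0)

noncomputable instance {D : Type u} [Category.{v} D] (a : CoefSys.{w} D) (n : ℕ) :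
    AddCommGroup (Cochain a n) :=
  inferInstanceAs (AddCommGroup (∀ q : Fin (n + 1) ⥤ D, a.A (q.obj 0)))

/-- The `i`-th coface map `[n] → [n+1]`, skipping the vertex `i`, as a functor
between the associated poset categories. -/
def coface {n : ℕ} (i : Fin (n + 2)) : (Fin (n + 1)) ⥤ (Fin (n + 2)) :=
  (Fin.succAboveOrderEmb i).monotone.functor

/-- The usual simplicial differential of the cochain complex of a small
category with coefficients in a contravariant functor: the alternating sum of
the face maps, the `0`-th term being transported along the coefficient map of
`q(0 • 1)`. -/
noncomputable def cochainD {D : Type u} [Category.{v} D] (a : CoefSys.{w} D) (n : ℕ) :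
    Cochain a n →+ Cochain a (n + 1) :=
  AddMonoidHom.mk'
    (fun c r => ∑ i : Fin (n + 2),
      ((-1 : ℤ) ^ (i : ℕ)) •
        a.map (r.map (homOfLE (Fin.zero_le (Fin.succAboveOrderEmb i 0))))
          (c (coface i ⋙ r)))
    (by
      intro c c'
      funext r
      show (∑ i : Fin (n + 2), (_ : a.A (r.obj 0))) = (∑ i : Fin (n + 2), (_ : a.A (r.obj 0))) +
        (∑ i : Fin (n + 2), (_ : a.A (r.obj 0)))
      rw [← Finset.sum_add_distrib]
      refine Finset.sum_congr rfl fun i _ => ?_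
      rw [show (c + c') (coface i ⋙ r) =
          c (coface i ⋙ r) + c' (coface i ⋙ r) from rfl]
      exact (congrArg (((-1 : ℤ) ^ (i : ℕ)) • ·) (map_add _ _ _)).trans (smul_add _ _ _))

/-- The cohomology of a small category with coefficients in a (contravariant)
coefficient system, computed from the cochain complex above: `H⁰` is the kernel
of `d⁰` and `Hⁿ⁺¹` is the kernel of `dⁿ⁺¹` modulo the image of `dⁿ`. -/
noncomputable def catCohomology {D : Type u} [Category.{v} D] (a : CoefSys.{w} D) :
    ℕ → Type (max u v w)
  | 0 => ↥(cochainD a 0).ker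
  | (n + 1) => ↥(cochainD a (n + 1)).ker ⧸
      ((cochainD a n).range.addSubgroupOf (cochainD a (n + 1)).ker)

noncomputable instance {D : Type u} [Category.{v} D] (a : CoefSys.{w} D) :
    ∀ n : ℕ, AddCommGroup (catCohomology a n)
  | 0 => inferInstanceAs (AddCommGroup ↥(cochainD a 0).ker)
  | (n + 1) => inferInstanceAs (AddCommGroup (↥(cochainD a (n + 1)).ker ⧸
      ((cochainD a n).range.addSubgroupOf (cochainD a (n + 1)).ker)))

/-- The coefficient system `a^m` on `C` obtained from a coefficient system `a`
on the Grothendieck construction `m ⋊ C`: its value at `c` is the product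
`∏_X a (X, c)` over the objects `X` of `m c`, with the evident induced maps. -/
noncomputable def prodCoef {C : Type u} [Category.{u} C] (m : C ⥤ Cat.{u, u})
    (a : CoefSys.{w} (Grothendieck m)) : CoefSys.{max u w} C where
  A c := ∀ X : (m.obj c), a.A ⟨c, X⟩
  map {c c'} f := AddMonoidHom.mk'
    (fun g X => a.map
      (show (⟨c, X⟩ : Grothendieck m) ⟶ ⟨c', (m.map f).toFunctor.obj X⟩ from ⟨f, 𝟙 _⟩)
      (g ((m.map f).toFunctor.obj X)))
    (by intro g g'; funext X; simp)

universe v₁ u₁ v₂ u₂ u' v' w'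

section CochainComplexIso

variable {A B A' B' : Type*} [AddCommGroup A] [AddCommGroup B] [AddCommGroup A']
  [AddCommGroup B'] {f : A →+ B} {f' : A' →+ B'} {eA : A ≃+ A'} {eB : B ≃+ B'}

theorem AddMonoidHom.ker_map_addEquiv (h : ∀ x, eB (f x) = f' (eA x)) :
    f.ker.map eA.toAddMonoidHom = f'.ker := by
  ext y
  rw [AddSubgroup.mem_map_equiv, AddMonoidHom.mem_ker, AddMonoidHom.mem_ker,
    ← eB.map_eq_zero_iff, h, eA.apply_symm_apply]

theorem AddMonoidHom.range_map_addEquiv (h : ∀ x, eB (f x) = f' (eA x)) :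
    f.range.map eB.toAddMonoidHom = f'.range := by
  ext y
  rw [AddSubgroup.mem_map_equiv, AddMonoidHom.mem_range, AddMonoidHom.mem_range]
  conv_rhs => rw [eA.surjective.exists]
  refine exists_congr fun x => ?_
  rw [← h]
  exact eB.eq_symm_apply

def AddMonoidHom.kerAddEquiv (h : ∀ x, eB (f x) = f' (eA x)) : f.ker ≃+ f'.ker :=
  (eA.addSubgroupMap f.ker).trans (AddEquiv.addSubgroupCongr (AddMonoidHom.ker_map_addEquiv h))

variable {D : Type u} [Category.{v} D] {D' : Type u'} [Category.{v'} D']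

noncomputable def catCohomologyAddEquiv (a : CoefSys.{w} D) (b : CoefSys.{w'} D')
    (e : ∀ k, Cochain a k ≃+ Cochain b k)
    (he : ∀ k c, e (k + 1) (cochainD a k c) = cochainD b k (e k c)) :
    ∀ n, catCohomology a n ≃+ catCohomology b n
  | 0 => AddMonoidHom.kerAddEquiv (he 0)
  | n + 1 => QuotientAddGroup.congr _ _ (AddMonoidHom.kerAddEquiv (he (n + 1))) (by
      ext y
      refine AddSubgroup.mem_map_equiv.trans ?_
      rw [AddSubgroup.mem_addSubgroupOf, AddSubgroup.mem_addSubgroupOf,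
        ← AddMonoidHom.range_map_addEquiv (he n), AddSubgroup.mem_map_equiv]
      rfl)

end CochainComplexIso

theorem CategoryTheory.isDiscrete_of_eq_of_hom_of_eq_id {D : Type u} [Category.{v} D]
    (h₁ : ∀ X Y : D, (X ⟶ Y) → X = Y) (h₂ : ∀ (X : D) (φ : X ⟶ X), φ = 𝟙 X) : IsDiscrete D where
  subsingleton X Y := ⟨fun φ ψ => by
    obtain rfl := h₁ X Y φ
    rw [h₂ X φ, h₂ X ψ]⟩
  eq_of_hom := h₁ _ _

namespace CategoryTheory.Grothendieck

variable {C : Type u₁} [Category.{v₁} C] {F : C ⥤ Cat.{v₂, u₂}} {k : ℕ}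

def chainFiber (q : Fin (k + 1) ⥤ C) (X : F.obj (q.obj 0)) (i : Fin (k + 1)) :
    F.obj (q.obj i) :=
  (F.map (q.map (homOfLE (Fin.zero_le i)))).toFunctor.obj X

theorem chainFiber_zero (q : Fin (k + 1) ⥤ C) (X : F.obj (q.obj 0)) :
    chainFiber q X 0 = X := by
  rw [chainFiber, Subsingleton.elim (homOfLE _) (𝟙 _), q.map_id, F.map_id]
  rfl

theorem map_chainFiber (q : Fin (k + 1) ⥤ C) (X : F.obj (q.obj 0)) {i j : Fin (k + 1)}
    (f : i ⟶ j) : (F.map (q.map f)).toFunctor.obj (chainFiber q X i) = chainFiber q X j := by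
  rw [chainFiber, chainFiber, ← Cat.Hom.comp_obj, ← F.map_comp, ← q.map_comp]
  rfl

def liftChain (q : Fin (k + 1) ⥤ C) (X : F.obj (q.obj 0)) : Fin (k + 1) ⥤ Grothendieck F where
  obj i := ⟨q.obj i, chainFiber q X i⟩
  map f := ⟨q.map f, eqToHom (map_chainFiber q X f)⟩
  map_id i := Grothendieck.ext _ _ (q.map_id i) (by simp only [id_fiber, eqToHom_trans])
  map_comp f g := Grothendieck.ext _ _ (q.map_comp f g)
    (by simp only [comp_fiber, eqToHom_map, eqToHom_trans])

theorem liftChain_forget_fiber [∀ c, IsDiscrete (F.obj c)] (Q : Fin (k + 1) ⥤ Grothendieck F) :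
    liftChain (Q ⋙ forget F) (Q.obj 0).fiber = Q := by
  have hobj (i : Fin (k + 1)) : (liftChain (Q ⋙ forget F) (Q.obj 0).fiber).obj i = Q.obj i := by
    change (⟨(Q.obj i).base, chainFiber (Q ⋙ forget F) (Q.obj 0).fiber i⟩ : Grothendieck F) =
      Q.obj i
    rw [show chainFiber (Q ⋙ forget F) (Q.obj 0).fiber i = (Q.obj i).fiber from
      IsDiscrete.eq_of_hom (Q.map (homOfLE (Fin.zero_le i))).fiber]
  refine Functor.ext hobj fun i j f => Grothendieck.ext _ _ ?_ (Subsingleton.elim _ _)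
  simp only [comp_base, base_eqToHom]
  -- the two `eqToHom`s go between definitionally equal objects
  exact (show 𝟙 _ ≫ (Q.map f).base ≫ 𝟙 _ = (Q.map f).base by simp).symm

-- Lemma 6.11 of the paper.
variable (F k) in
def chainEquiv [∀ c, IsDiscrete (F.obj c)] :
    (Fin (k + 1) ⥤ Grothendieck F) ≃ Σ q : Fin (k + 1) ⥤ C, F.obj (q.obj 0) where
  toFun Q := ⟨Q ⋙ forget F, (Q.obj 0).fiber⟩
  invFun p := liftChain p.1 p.2
  left_inv := liftChain_forget_fiber
  right_inv p := Sigma.ext rfl (heq_of_eq (chainFiber_zero p.1 p.2))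

end CategoryTheory.Grothendieck

section Uncurry

variable {C : Type u} [Category.{u} C] {m : C ⥤ Cat.{u, u}} [∀ c, IsDiscrete (m.obj c)]
  (a : CoefSys.{w} (Grothendieck m))

theorem prodCoef_map_apply_fiber {P Q : Grothendieck m} (g : P ⟶ Q)
    (x : (prodCoef m a).A Q.base) : (prodCoef m a).map g.base x P.fiber = a.map g (x Q.fiber) := by
  obtain ⟨c₀, X₀⟩ := P
  obtain ⟨c₁, Y⟩ := Q
  obtain ⟨b, φ⟩ := g
  -- reduce the projections of `⟨c₁, Y⟩` hidden in instance arguments, so that `Y` can be subst'd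
  dsimp only at b φ x ⊢
  obtain rfl : (m.map b).toFunctor.obj X₀ = Y := IsDiscrete.eq_of_hom φ
  obtain rfl := Subsingleton.elim φ (𝟙 _)
  rfl

noncomputable def cochainUncurry (k : ℕ) : Cochain (prodCoef m a) k ≃+ Cochain a k :=
  { (Equiv.piCurry fun (q : Fin (k + 1) ⥤ C) (X : m.obj (q.obj 0)) => a.A ⟨q.obj 0, X⟩).symm.trans
      (Equiv.piCongrLeft' _ (Grothendieck.chainEquiv m k).symm) with
    map_add' _ _ := rfl }

theorem cochainUncurry_cochainD (k : ℕ) (c : Cochain (prodCoef m a) k) :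
    cochainUncurry a (k + 1) (cochainD (prodCoef m a) k c) =
      cochainD a k (cochainUncurry a k c) := by
  funext R
  change (∑ i : Fin (k + 2), _ : (prodCoef m a).A (R.obj 0).base) (R.obj 0).fiber = _
  refine (Finset.sum_apply _ _ _).trans (Finset.sum_congr rfl fun i _ => ?_)
  exact congrArg _ (prodCoef_map_apply_fiber a (R.map _) _)

end Uncurry

theorem stmt15_general {C : Type u} [Category.{u} C] (m : C ⥤ Cat.{u, u})
    (hdisc₁ : ∀ (c : C) (X Y : ↑(m.obj c)), (X ⟶ Y) → X = Y)
    (hdisc₂ : ∀ (c : C) (X : ↑(m.obj c)) (φ : X ⟶ X), φ = 𝟙 X)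
    (a : CoefSys.{w} (Grothendieck m)) (n : ℕ) :
    Nonempty (catCohomology a n ≃+ catCohomology (prodCoef m a) n) := by
  have (c : C) : IsDiscrete (m.obj c) :=
    isDiscrete_of_eq_of_hom_of_eq_id (hdisc₁ c) (hdisc₂ c)
  exact ⟨(catCohomologyAddEquiv _ _ (cochainUncurry a) (cochainUncurry_cochainD a) n).symm⟩

/-- Let `C` be a small category and `m : C ⥤ Cat` a representation
all of whose values are discrete categories.  For every contravariant functor
`a` from the Grothendieck construction (semidirect product) `m ⋊ C` to abelian
groups, and every `n ≥ 0`, the cohomology of `m ⋊ C` with coefficients in `a`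
is isomorphic to the cohomology of `C` with coefficients in the product functor
`a^m`. -/
theorem stmt15 {C : Type u} [Category.{u} C] (m : C ⥤ Cat.{u, u})
    (hdisc₁ : ∀ (c : C) (X Y : ↑(m.obj c)), (X ⟶ Y) → X = Y)
    (hdisc₂ : ∀ (c : C) (X : ↑(m.obj c)) (φ : X ⟶ X), φ = 𝟙 X)
    (a : CoefSys.{w} (Grothendieck m)) (ha : a.IsFunctorial) (n : ℕ) :
    Nonempty (catCohomology a n ≃+ catCohomology (prodCoef m a) n) :=
  stmt15_general m hdisc₁ hdisc₂ a n
end
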